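/- arXiv:2302.01581 — 5 statements merged into one kernel-verified Lean document; each statement's English description precedes it below -/
import Mathlib

section
/- For every z ∈ ℝ^K (K ≥ 1) there exists a unique real number τ such that Σ_{j=1}^K max(z_j − τ, 0) = 1. -/
/-! The map `τ ↦ ∑ j, max (z j - τ) 0` is continuous, vanishes at `τ = max z`, is at least `c`
at `τ = max z - c`, and is strictly decreasing wherever it is positive: the intermediate value
theorem gives existence and strict monotonicity gives uniqueness. -/

open Finset

section

variable {ι : Type*} [Fintype ι] (z : ι → ℝ)

theorem continuous_sum_max_sub : Continuous fun τ : ℝ => ∑ j, max (z j - τ) 0 := by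
  fun_prop

theorem sum_max_sub_lt_of_lt {a b : ℝ} (hab : a < b) (hb : 0 < ∑ j, max (z j - b) 0) :
    ∑ j, max (z j - b) 0 < ∑ j, max (z j - a) 0 := by
  obtain ⟨i, -, hi⟩ : ∃ i ∈ univ, (0 : ℝ) < max (z i - b) 0 :=
    exists_lt_of_sum_lt (by simpa using hb)
  have hzi : b < z i := by
    by_contra! h
    simp [max_eq_right (sub_nonpos.mpr h)] at hi
  refine sum_lt_sum (fun j _ => max_le_max (by linarith) le_rfl) ⟨i, mem_univ i, ?_⟩
  rw [max_eq_left (by linarith), max_eq_left (by linarith)]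
  linarith

theorem exists_sum_max_sub_eq [Nonempty ι] {c : ℝ} (hc : 0 ≤ c) :
    ∃ τ, ∑ j, max (z j - τ) 0 = c := by
  obtain ⟨i, hi⟩ := Finite.exists_max z
  have h_top : ∑ j, max (z j - z i) 0 = 0 :=
    sum_eq_zero fun j _ => max_eq_right (sub_nonpos.mpr (hi j))
  have h_bot : c ≤ ∑ j, max (z j - (z i - c)) 0 :=
    calc c = max (z i - (z i - c)) 0 := by rw [sub_sub_cancel, max_eq_left hc]
      _ ≤ ∑ j, max (z j - (z i - c)) 0 :=
        single_le_sum (f := fun j => max (z j - (z i - c)) 0)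
          (fun j _ => le_max_right _ _) (mem_univ i)
  obtain ⟨τ, -, hτ⟩ := intermediate_value_Icc' (sub_le_self _ hc)
    (continuous_sum_max_sub z).continuousOn ⟨h_top.trans_le hc, h_bot⟩
  exact ⟨τ, hτ⟩

theorem existsUnique_sum_max_sub_eq [Nonempty ι] {c : ℝ} (hc : 0 < c) :
    ∃! τ, ∑ j, max (z j - τ) 0 = c := by
  obtain ⟨τ, hτ⟩ := exists_sum_max_sub_eq z hc.le
  refine ⟨τ, hτ, fun σ hσ => ?_⟩
  rcases lt_trichotomy σ τ with h | h | h
  · linarith [sum_max_sub_lt_of_lt z h (hτ ▸ hc)]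
  · exact h
  · linarith [sum_max_sub_lt_of_lt z h (hσ ▸ hc)]

end

/-- for every `z ∈ ℝ^K` with `K ≥ 1`, there is a unique `τ ∈ ℝ`
such that `Σ_{j=1}^K max(z_j − τ, 0) = 1`. -/
theorem existsUnique_tau (K : ℕ) (hK : 1 ≤ K) (z : Fin K → ℝ) :
    ∃! τ : ℝ, ∑ j, max (z j - τ) 0 = 1 := by
  have : Nonempty (Fin K) := Fin.pos_iff_nonempty.mp hK
  exact existsUnique_sum_max_sub_eq z one_pos
end

section
/- For every z ∈ ℝ^K (K ≥ 1), define k(z) := max{k ∈ {1,…,K} : 1 + k·z_(k) > Σ_{j≤k} z_(j)} and τ(z) := ((Σ_{j≤k(z)} z_(j)) − 1)/k(z), where z_(1) ≥ … ≥ z_(K) are the sorted coordinates of z. Then Σ_{j=1}^K max(z_j − τ(z), 0) = 1. -/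
open Finset

noncomputable section

/-- `z_(k)` for `k = 1, …, K`: the `k`-th largest coordinate of `z`, given a
sorting permutation `σ` (so that `i ↦ z (σ i)` is decreasing). -/
def sortedCoord {K : ℕ} (z : Fin K → ℝ) (σ : Equiv.Perm (Fin K)) (k : ℕ) : ℝ :=
  if h : k - 1 < K then z (σ ⟨k - 1, h⟩) else 0

open Classical in
/-- The set `{k ∈ {1,…,K} : 1 + k·z_(k) > Σ_{j ≤ k} z_(j)}`. -/
def kSet {K : ℕ} (z : Fin K → ℝ) (σ : Equiv.Perm (Fin K)) : Finset ℕ :=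
  (Finset.Icc 1 K).filter
    (fun k => 1 + (k : ℝ) * sortedCoord z σ k > ∑ j ∈ Finset.Icc 1 k, sortedCoord z σ j)

/-- `k(z) := max {k ∈ {1,…,K} : 1 + k·z_(k) > Σ_{j ≤ k} z_(j)}`. -/
def kFun {K : ℕ} (z : Fin K → ℝ) (σ : Equiv.Perm (Fin K)) : ℕ :=
  sSup (kSet z σ : Set ℕ)

/-- `τ(z) := ((Σ_{j ≤ k(z)} z_(j)) − 1) / k(z)`. -/
def tauFun {K : ℕ} (z : Fin K → ℝ) (σ : Equiv.Perm (Fin K)) : ℝ :=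
  ((∑ j ∈ Finset.Icc 1 (kFun z σ), sortedCoord z σ j) - 1) / (kFun z σ : ℝ)

/-!
The inequality `1 + k z_(k) > Σ_{j ≤ k} z_(j)` says that `z_(k)` exceeds the candidate threshold
`(Σ_{j ≤ k} z_(j) - 1) / k`. At `k = k(z)` this gives `z_(k) > τ(z)`; its failure at `k(z) + 1`,
rearranged, gives `k(z) z_(k+1) ≤ Σ_{j ≤ k(z)} z_(j) - 1`, i.e. `z_(k+1) ≤ τ(z)`. As the
coordinates are sorted, exactly the `k(z)` largest of them exceed `τ(z)`, and their excesses add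
up to `Σ_{j ≤ k(z)} z_(j) - k(z) τ(z) = 1`.
-/

theorem Finset.sum_max_sub_eq_sum_sub_card_nsmul {ι α : Type*} [AddCommGroup α] [LinearOrder α]
    [IsOrderedAddMonoid α] [DecidableEq ι] {s t : Finset ι} (hts : t ⊆ s) (a : ι → α) {τ : α}
    (h_above : ∀ i ∈ t, τ ≤ a i) (h_below : ∀ i ∈ s, i ∉ t → a i ≤ τ) :
    ∑ i ∈ s, max (a i - τ) 0 = ∑ i ∈ t, a i - #t • τ := by
  rw [← sum_sdiff hts, sum_eq_zero fun i hi ↦ ?_, zero_add, ← sum_const, ← sum_sub_distrib]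
  · exact sum_congr rfl fun i hi ↦ max_eq_left (sub_nonneg.mpr (h_above i hi))
  · obtain ⟨his, hit⟩ := mem_sdiff.mp hi
    exact max_eq_right (sub_nonpos.mpr (h_below i his hit))

section

variable {K : ℕ} (z : Fin K → ℝ) (σ : Equiv.Perm (Fin K))

theorem sum_sortedCoord {M : Type*} [AddCommMonoid M] (f : ℝ → M) :
    ∑ j ∈ Icc 1 K, f (sortedCoord z σ j) = ∑ i, f (z i) :=
  calc ∑ j ∈ Icc 1 K, f (sortedCoord z σ j)
      = ∑ i ∈ range K, f (sortedCoord z σ (i + 1)) := by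
        rw [range_eq_Ico, sum_Ico_add' (fun j ↦ f (sortedCoord z σ j)), zero_add,
          Ico_add_one_right_eq_Icc]
    _ = ∑ i : Fin K, f (z (σ i)) := by
        rw [← Fin.sum_univ_eq_sum_range (fun i ↦ f (sortedCoord z σ (i + 1)))]
        simp [sortedCoord]
    _ = ∑ i, f (z i) := Equiv.sum_comp σ (f ∘ z)

theorem mem_kSet_iff {k : ℕ} : k ∈ kSet z σ ↔
    k ∈ Icc 1 K ∧ ∑ j ∈ Icc 1 k, sortedCoord z σ j < 1 + k * sortedCoord z σ k := by
  simp only [kSet, mem_filter, gt_iff_lt]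

theorem one_mem_kSet (hK : 1 ≤ K) : 1 ∈ kSet z σ := by
  simp [mem_kSet_iff, hK]

theorem kFun_mem_kSet (hK : 1 ≤ K) : kFun z σ ∈ kSet z σ :=
  Finset.Nonempty.csSup_mem ⟨1, one_mem_kSet z σ hK⟩

theorem kFun_mem_Icc (hK : 1 ≤ K) : kFun z σ ∈ Icc 1 K :=
  ((mem_kSet_iff z σ).mp (kFun_mem_kSet z σ hK)).1

theorem le_kFun {k : ℕ} (hk : k ∈ kSet z σ) : k ≤ kFun z σ :=
  le_csSup (kSet z σ).bddAbove hk

theorem kFun_mul_tauFun (hK : 1 ≤ K) :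
    kFun z σ * tauFun z σ = ∑ j ∈ Icc 1 (kFun z σ), sortedCoord z σ j - 1 := by
  have := (mem_Icc.mp (kFun_mem_Icc z σ hK)).1
  rw [tauFun, mul_div_cancel₀]
  exact_mod_cast (by omega : kFun z σ ≠ 0)

variable {z σ}

theorem sortedCoord_antitoneOn (hσ : Antitone (fun i ↦ z (σ i))) :
    AntitoneOn (sortedCoord z σ) (Icc 1 K) := by
  intro i hi j hj hij
  simp only [coe_Icc, Set.mem_Icc] at hi hj
  simp only [sortedCoord, dif_pos (show i - 1 < K by omega), dif_pos (show j - 1 < K by omega)]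
  exact hσ (Fin.mk_le_mk.mpr (by omega))

theorem tauFun_lt_sortedCoord (hK : 1 ≤ K) (hσ : Antitone (fun i ↦ z (σ i))) {j : ℕ}
    (hj : j ∈ Icc 1 (kFun z σ)) : tauFun z σ < sortedCoord z σ j := by
  have hk := kFun_mem_Icc z σ hK
  have hk_pos : (0 : ℝ) < kFun z σ := by exact_mod_cast (mem_Icc.mp hk).1
  have h_top : tauFun z σ < sortedCoord z σ (kFun z σ) := by
    refine lt_of_mul_lt_mul_left ?_ hk_pos.le
    rw [kFun_mul_tauFun z σ hK]
    linarith [((mem_kSet_iff z σ).mp (kFun_mem_kSet z σ hK)).2]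
  refine h_top.trans_le (sortedCoord_antitoneOn hσ ?_ hk (mem_Icc.mp hj).2)
  exact Icc_subset_Icc_right (mem_Icc.mp hk).2 hj

theorem sortedCoord_le_tauFun (hσ : Antitone (fun i ↦ z (σ i))) {j : ℕ} (hj : j ∈ Icc 1 K)
    (hkj : kFun z σ < j) : sortedCoord z σ j ≤ tauFun z σ := by
  have hK : 1 ≤ K := (mem_Icc.mp hj).1.trans (mem_Icc.mp hj).2
  have hk_pos : (0 : ℝ) < kFun z σ := by exact_mod_cast (mem_Icc.mp (kFun_mem_Icc z σ hK)).1
  have hk1 : kFun z σ + 1 ∈ Icc 1 K := by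
    simp only [mem_Icc] at hj ⊢
    omega
  have h_not : kFun z σ + 1 ∉ kSet z σ := fun h ↦ by
    have := le_kFun z σ h
    omega
  rw [mem_kSet_iff, not_and, not_lt, sum_Icc_succ_top (by omega)] at h_not
  have h_next : sortedCoord z σ (kFun z σ + 1) ≤ tauFun z σ := by
    refine le_of_mul_le_mul_left ?_ hk_pos
    rw [kFun_mul_tauFun z σ hK]
    push_cast at h_not
    linarith [h_not hk1]
  exact (sortedCoord_antitoneOn hσ hk1 hj hkj).trans h_next

end

/-- `Σ_{j=1}^K max(z_j − τ(z), 0) = 1`. -/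
theorem sum_pos_part_tauFun_eq_one (K : ℕ) (hK : 1 ≤ K) (z : Fin K → ℝ)
    (σ : Equiv.Perm (Fin K)) (hσ : Antitone (fun i => z (σ i))) :
    ∑ j, max (z j - tauFun z σ) 0 = 1 := by
  have hkK : kFun z σ ≤ K := (mem_Icc.mp (kFun_mem_Icc z σ hK)).2
  have h_above (j : ℕ) (hj : j ∈ Icc 1 (kFun z σ)) : tauFun z σ ≤ sortedCoord z σ j :=
    (tauFun_lt_sortedCoord hK hσ hj).le
  have h_below (j : ℕ) (hj : j ∈ Icc 1 K) (hjk : j ∉ Icc 1 (kFun z σ)) :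
      sortedCoord z σ j ≤ tauFun z σ :=
    sortedCoord_le_tauFun hσ hj (by simpa [(mem_Icc.mp hj).1] using hjk)
  rw [← sum_sortedCoord z σ (fun x ↦ max (x - tauFun z σ) 0),
    sum_max_sub_eq_sum_sub_card_nsmul (Icc_subset_Icc_right hkK) _ h_above h_below,
    Nat.card_Icc, add_tsub_cancel_right, nsmul_eq_mul, kFun_mul_tauFun z σ hK]
  ring
end
end

section
/- For every z ∈ ℝ^K (K ≥ 1), k(z) = |S(z)|, where k(z) := max{k ∈ {1,…,K} : 1 + k·z_(k) > Σ_{j≤k} z_(j)} (with z_(1) ≥ … ≥ z_(K) the sorted coordinates of z) and S(z) := {j ∈ {1,…,K} : sparsemax_j(z) > 0} is the support of the Euclidean projection of z onto the standard probability simplex. -/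
open Finset

noncomputable section

/-- The standard probability simplex `Δ^{K−1} ⊆ ℝ^K`. -/
def stdSimplex' (K : ℕ) : Set (Fin K → ℝ) :=
  {y | (∀ i, 0 ≤ y i) ∧ ∑ i, y i = 1}

/-!
Comparing `p` with the points obtained by moving mass from one coordinate to another shows
that `p i = max (z i - τ) 0` for a single threshold `τ`. So the support of `p` is
`{i | τ < z i}`; if it has `c` elements, the `c` largest coordinates sum to `1 + c τ`.
Then `1 + k z_(k) > ∑_{j ≤ k} z_(j)` holds at `k = c` because `z_(c) > τ`, and fails for
`k > c` because there `z_(k) ≤ τ` and `∑_{j ≤ k} z_(j) ≥ 1 + c τ + (k - c) z_(k)`.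
-/

section SimplexProjection

variable {ι : Type*} [Fintype ι] {z p : ι → ℝ}

def IsProjStdSimplex (z p : ι → ℝ) : Prop :=
  p ∈ stdSimplex ℝ ι ∧ ∀ y ∈ stdSimplex ℝ ι, ∑ i, (p i - z i) ^ 2 ≤ ∑ i, (y i - z i) ^ 2

lemma sum_sq_sub_transfer [DecidableEq ι] {i j : ι} (hij : i ≠ j) (t : ℝ) :
    ∑ k, ((p + Pi.single j t - Pi.single i t : ι → ℝ) k - z k) ^ 2
      = ∑ k, (p k - z k) ^ 2 + 2 * t * ((p j - z j) - (p i - z i)) + 2 * t ^ 2 := by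
  have hdiff : ∑ k, (((p + Pi.single j t - Pi.single i t : ι → ℝ) k - z k) ^ 2 - (p k - z k) ^ 2)
      = 2 * t * ((p j - z j) - (p i - z i)) + 2 * t ^ 2 := by
    rw [Fintype.sum_eq_add i j hij]
    · simp [hij, hij.symm]
      ring
    · rintro k ⟨hki, hkj⟩
      simp [hki, hkj]
  rw [sum_sub_distrib] at hdiff
  linarith

lemma transfer_mem_stdSimplex [DecidableEq ι] (hp : p ∈ stdSimplex ℝ ι) {i j : ι} (hij : i ≠ j)
    {t : ℝ} (ht : 0 ≤ t) (hti : t ≤ p i) :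
    p + Pi.single j t - Pi.single i t ∈ stdSimplex ℝ ι := by
  refine ⟨fun k => ?_, by simp [sum_add_distrib, sum_sub_distrib, hp.2]⟩
  have := hp.1 k
  rcases eq_or_ne k i with rfl | hki
  · simp [hij]
    linarith
  rcases eq_or_ne k j with rfl | hkj
  · simp [hki]
    linarith
  simpa [hki, hkj]

lemma IsProjStdSimplex.sub_le_sub (hp : IsProjStdSimplex z p) {i : ι} (hi : 0 < p i) (j : ι) :
    p i - z i ≤ p j - z j := by
  classical
  rcases eq_or_ne i j with rfl | hij
  · rfl
  refine le_of_forall_pos_le_add fun ε hε => ?_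
  have ht : 0 < min ε (p i) := lt_min hε hi
  have hle := hp.2 _ (transfer_mem_stdSimplex hp.1 hij ht.le (min_le_right _ _))
  rw [sum_sq_sub_transfer hij] at hle
  have : 0 ≤ (p j - z j) - (p i - z i) + min ε (p i) := by nlinarith
  linarith [min_le_left ε (p i)]

lemma IsProjStdSimplex.exists_eq_max_sub (hp : IsProjStdSimplex z p) :
    ∃ τ, ∀ i, p i = max (z i - τ) 0 := by
  obtain ⟨i₀, hi₀⟩ : ∃ i, 0 < p i := by
    by_contra! h
    have := sum_nonpos fun i (_ : i ∈ univ) => h i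
    linarith [hp.1.2]
  refine ⟨z i₀ - p i₀, fun i => ?_⟩
  rcases (hp.1.1 i).lt_or_eq with hi | hi
  · have := hp.sub_le_sub hi i₀
    have := hp.sub_le_sub hi₀ i
    rw [max_eq_left] <;> linarith
  · have := hp.sub_le_sub hi₀ i
    rw [max_eq_right] <;> linarith

lemma sum_filter_lt_eq_of_eq_max_sub {τ : ℝ} (hτ : ∀ i, p i = max (z i - τ) 0)
    (hsum : ∑ i, p i = 1) :
    ∑ i ∈ univ.filter (fun i => τ < z i), z i = 1 + #(univ.filter fun i => τ < z i) * τ := by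
  have : ∑ i ∈ univ.filter (fun i => τ < z i), (z i - τ) = 1 := by
    rw [← hsum, sum_filter]
    refine sum_congr rfl fun i _ => ?_
    rw [hτ i]
    split_ifs with h
    · exact (max_eq_left (by linarith)).symm
    · exact (max_eq_right (by linarith)).symm
  rw [sum_sub_distrib, sum_const, nsmul_eq_mul] at this
  linarith

end SimplexProjection

lemma Fin.iff_lt_card_filter_of_antitone {K : ℕ} {P : Fin K → Prop} [DecidablePred P]
    (hP : Antitone P) (i : Fin K) : P i ↔ (i : ℕ) < #(univ.filter P) := by
  constructor
  · intro hi
    have : Iic i ⊆ univ.filter P := fun j hj => by simpa using hP (mem_Iic.1 hj) hi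
    have := card_le_card this
    rw [Fin.card_Iic] at this
    omega
  · intro hi
    by_contra hni
    have : univ.filter P ⊆ Iio i := fun j hj => by
      simp only [mem_filter, mem_univ, true_and] at hj
      exact mem_Iio.2 (lt_of_not_ge fun hij => hni (hP hij hj))
    have := card_le_card this
    rw [Fin.card_Iio] at this
    omega

lemma isGreatest_of_sum_Icc_eq {K c : ℕ} {s : ℕ → ℝ} {τ : ℝ} (hs : AntitoneOn s (Set.Icc 1 K))
    (hc : c ∈ Icc 1 K) (habove : τ < s c) (hbelow : ∀ k ∈ Ioc c K, s k ≤ τ)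
    (hsum : ∑ j ∈ Icc 1 c, s j = 1 + c * τ) :
    IsGreatest {k | k ∈ Icc 1 K ∧ ∑ j ∈ Icc 1 k, s j < 1 + k * s k} c := by
  refine ⟨⟨hc, by rw [hsum]; nlinarith [(Nat.one_le_cast (α := ℝ)).2 (mem_Icc.1 hc).1]⟩, ?_⟩
  rintro k ⟨hk, hlt⟩
  by_contra! hck
  rw [mem_Icc] at hk
  have hsplit : ∑ j ∈ Icc 1 k, s j = ∑ j ∈ Icc 1 c, s j + ∑ j ∈ Ioc c k, s j := by
    have hIoc (n : ℕ) : Icc 1 n = Ioc 0 n := Icc_add_one_left_eq_Ioc 0 n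
    rw [hIoc, hIoc]
    exact (sum_Ioc_consecutive s (Nat.zero_le c) hck.le).symm
  have htail : #(Ioc c k) • s k ≤ ∑ j ∈ Ioc c k, s j :=
    card_nsmul_le_sum _ _ _ fun j hj => by
      rw [mem_Ioc] at hj
      exact hs ⟨by omega, by omega⟩ hk hj.2
  rw [Nat.card_Ioc, nsmul_eq_mul, Nat.cast_sub hck.le] at htail
  have hsk := hbelow k (mem_Ioc.2 ⟨hck, hk.2⟩)
  have hc0 : (0 : ℝ) ≤ c := c.cast_nonneg
  rw [hsplit, hsum] at hlt
  nlinarith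

section Sorted

variable {K : ℕ} (z : Fin K → ℝ) (σ : Equiv.Perm (Fin K))

lemma sortedCoord_of_mem_Icc {k : ℕ} (hk : k ∈ Icc 1 K) :
    sortedCoord z σ k = z (σ ⟨k - 1, by rw [mem_Icc] at hk; omega⟩) :=
  dif_pos _

lemma antitoneOn_sortedCoord (hσ : Antitone fun i => z (σ i)) :
    AntitoneOn (sortedCoord z σ) (Set.Icc 1 K) := fun a ha b hb hab => by
  rw [sortedCoord_of_mem_Icc z σ (mem_Icc.2 ha), sortedCoord_of_mem_Icc z σ (mem_Icc.2 hb)]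
  exact hσ (Fin.mk_le_mk.2 (by omega))

lemma sum_Icc_sortedCoord {m : ℕ} (hm : m ≤ K) :
    ∑ j ∈ Icc 1 m, sortedCoord z σ j
      = ∑ i ∈ univ.filter (fun i : Fin K => (i : ℕ) < m), z (σ i) := by
  refine (sum_bij (fun (a : Fin K) _ => (a : ℕ) + 1) ?_ ?_ ?_ ?_).symm
  · intro a ha
    simp only [mem_filter, mem_univ, true_and] at ha
    simp only [mem_Icc]
    omega
  · intro a _ b _ hab
    exact Fin.ext (by simpa using hab)
  · intro b hb
    simp only [mem_Icc] at hb
    exact ⟨⟨b - 1, by omega⟩, by simp only [mem_filter, mem_univ, true_and]; omega, by simp; omega⟩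
  · intro a _
    rw [sortedCoord_of_mem_Icc z σ (by simp)]
    simp

lemma coe_kSet : (kSet z σ : Set ℕ)
    = {k | k ∈ Icc 1 K ∧ ∑ j ∈ Icc 1 k, sortedCoord z σ j < 1 + k * sortedCoord z σ k} := by
  ext k
  simp [kSet]

lemma kFun_eq_card_filter_lt (hσ : Antitone fun i => z (σ i)) {τ : ℝ}
    (hzsum : ∑ i ∈ univ.filter (fun i => τ < z i), z i = 1 + #(univ.filter fun i => τ < z i) * τ) :
    kFun z σ = #(univ.filter fun i => τ < z i) := by
  set c := #(univ.filter fun i => τ < z (σ i))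
  have hcard : #(univ.filter fun i => τ < z i) = c := card_equiv σ.symm (by simp)
  have hlt : ∀ i : Fin K, τ < z (σ i) ↔ (i : ℕ) < c :=
    Fin.iff_lt_card_filter_of_antitone fun a b hab h => lt_of_lt_of_le h (hσ hab)
  rw [hcard] at hzsum ⊢
  have hc : c ∈ Icc 1 K := by
    refine mem_Icc.2
      ⟨Nat.one_le_iff_ne_zero.2 fun hc0 => ?_, (card_filter_le _ _).trans_eq (by simp)⟩
    rw [hc0, card_eq_zero.1 (hcard.trans hc0)] at hzsum
    simp at hzsum
  have hsum : ∑ j ∈ Icc 1 c, sortedCoord z σ j = 1 + c * τ := by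
    rw [sum_Icc_sortedCoord z σ (mem_Icc.1 hc).2, ← filter_congr fun i _ => hlt i, ← hzsum]
    exact sum_equiv σ (by simp) fun _ _ => rfl
  have habove : τ < sortedCoord z σ c := by
    rw [sortedCoord_of_mem_Icc z σ hc, hlt]
    exact Nat.sub_lt (mem_Icc.1 hc).1 one_pos
  have hbelow : ∀ k ∈ Ioc c K, sortedCoord z σ k ≤ τ := fun k hk => by
    rw [mem_Ioc] at hk
    rw [sortedCoord_of_mem_Icc z σ (mem_Icc.2 ⟨by omega, hk.2⟩), ← not_lt, hlt]
    simp
    omega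
  rw [kFun, coe_kSet]
  exact (isGreatest_of_sum_Icc_eq (antitoneOn_sortedCoord z σ hσ) hc habove hbelow hsum).csSup_eq

end Sorted

open Classical in
theorem kFun_eq_card_support_general (K : ℕ) (z : Fin K → ℝ)
    (σ : Equiv.Perm (Fin K)) (hσ : Antitone (fun i => z (σ i)))
    (p : Fin K → ℝ)
    (hp : p ∈ stdSimplex' K ∧
      ∀ y ∈ stdSimplex' K, ∑ i, (p i - z i) ^ 2 ≤ ∑ i, (y i - z i) ^ 2) :
    kFun z σ = (Finset.univ.filter (fun j => 0 < p j)).card := by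
  obtain ⟨τ, hτ⟩ := IsProjStdSimplex.exists_eq_max_sub hp
  have hsupp : univ.filter (fun j => 0 < p j) = univ.filter (fun j => τ < z j) := by
    ext j
    simp [hτ j]
  rw [hsupp]
  exact kFun_eq_card_filter_lt z σ hσ (sum_filter_lt_eq_of_eq_max_sub hτ hp.1.2)

open Classical in
/-- `k(z) = |S(z)|`, where `S(z)` is the support of the Euclidean
projection `p = sparsemax(z)` of `z` onto the simplex. -/
theorem kFun_eq_card_support (K : ℕ) (hK : 1 ≤ K) (z : Fin K → ℝ)
    (σ : Equiv.Perm (Fin K)) (hσ : Antitone (fun i => z (σ i)))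
    (p : Fin K → ℝ)
    (hp : p ∈ stdSimplex' K ∧
      ∀ y ∈ stdSimplex' K, ∑ i, (p i - z i) ^ 2 ≤ ∑ i, (y i - z i) ^ 2) :
    kFun z σ = (Finset.univ.filter (fun j => 0 < p j)).card :=
  kFun_eq_card_support_general K z σ hσ p hp
end
end

section
/- For every z ∈ ℝ^K (K ≥ 1), the unique real number τ(z) satisfying Σ_j max(z_j − τ(z), 0) = 1 is given by τ(z) = ((Σ_{j∈S(z)} z_j) − 1)/|S(z)|, where S(z) := {j : sparsemax_j(z) > 0} is the support of the Euclidean projection sparsemax(z) of z onto the standard probability simplex. -/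
open Finset

noncomputable section

/-!
Let `q := (z - τ)₊`. Since `∑ q = 1`, `q` lies in the simplex, and it satisfies the variational
inequality `⟪y - q, z - q⟫ ≤ 0` for every `y` in the simplex: coordinatewise `z - q = min z τ ≤ τ`,
with equality wherever `q > 0`. Hence `q` is the Euclidean projection, so `p = q`, the support of
`p` is `{j | τ < z j}`, and summing `p j = z j - τ` over it gives `∑_S z - |S| τ = 1`.
-/

lemma sub_max_sub_zero_le (a τ : ℝ) : a - max (a - τ) 0 ≤ τ := by
  rcases le_total τ a with h | h
  · rw [max_eq_left (sub_nonneg.mpr h)]; linarith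
  · rw [max_eq_right (sub_nonpos.mpr h)]; linarith

lemma max_sub_zero_mul_sub (a τ : ℝ) :
    max (a - τ) 0 * (a - max (a - τ) 0) = τ * max (a - τ) 0 := by
  rcases le_total τ a with h | h
  · rw [max_eq_left (sub_nonneg.mpr h)]; ring
  · rw [max_eq_right (sub_nonpos.mpr h)]; ring

section

variable {ι : Type*} [Fintype ι]

lemma sum_sub_mul_sub_max_sub_zero_nonpos {z : ι → ℝ} {τ : ℝ}
    (hτ : ∑ j, max (z j - τ) 0 = 1) {y : ι → ℝ} (hy : y ∈ stdSimplex ℝ ι) :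
    ∑ j, (y j - max (z j - τ) 0) * (z j - max (z j - τ) 0) ≤ 0 := by
  have hy_le : ∑ j, y j * (z j - max (z j - τ) 0) ≤ τ :=
    calc ∑ j, y j * (z j - max (z j - τ) 0) ≤ ∑ j, y j * τ :=
          sum_le_sum fun j _ => mul_le_mul_of_nonneg_left (sub_max_sub_zero_le _ _) (hy.1 j)
      _ = τ := by rw [← sum_mul, hy.2, one_mul]
  have hq_eq : ∑ j, max (z j - τ) 0 * (z j - max (z j - τ) 0) = τ := by
    simp only [max_sub_zero_mul_sub, ← mul_sum, hτ, mul_one]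
  simp only [sub_mul, sum_sub_distrib, hq_eq]
  linarith

lemma sum_sq_sub_add_sum_sq_sub_le {p q z : ι → ℝ}
    (h : ∑ j, (p j - q j) * (z j - q j) ≤ 0) :
    ∑ j, (q j - z j) ^ 2 + ∑ j, (p j - q j) ^ 2 ≤ ∑ j, (p j - z j) ^ 2 := by
  have hexp : ∑ j, (p j - z j) ^ 2 = ∑ j, (q j - z j) ^ 2 + ∑ j, (p j - q j) ^ 2
      - 2 * ∑ j, (p j - q j) * (z j - q j) := by
    rw [mul_sum, ← sum_add_distrib, ← sum_sub_distrib]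
    exact sum_congr rfl fun j _ => by ring
  linarith

lemma eq_of_sum_sq_sub_le_of_variational {s : Set (ι → ℝ)} {p q z : ι → ℝ}
    (hp : ∀ y ∈ s, ∑ j, (p j - z j) ^ 2 ≤ ∑ j, (y j - z j) ^ 2) (hp_mem : p ∈ s)
    (hq : ∀ y ∈ s, ∑ j, (y j - q j) * (z j - q j) ≤ 0) (hq_mem : q ∈ s) : p = q := by
  have hpyth := sum_sq_sub_add_sum_sq_sub_le (hq p hp_mem)
  have hdist : ∑ j, (p j - q j) ^ 2 = 0 :=
    le_antisymm (by linarith [hp q hq_mem]) (sum_nonneg fun j _ => sq_nonneg _)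
  funext j
  have hsq := (sum_eq_zero_iff_of_nonneg fun j _ => sq_nonneg (p j - q j)).mp hdist j (mem_univ j)
  exact sub_eq_zero.mp (pow_eq_zero_iff two_ne_zero |>.mp hsq)

lemma eq_sum_filter_lt_sub_one_div_card {z : ι → ℝ} {τ : ℝ}
    (hτ : ∑ j, max (z j - τ) 0 = 1) :
    τ = ((∑ j ∈ univ.filter (fun j => τ < z j), z j) - 1) /
        ((univ.filter (fun j => τ < z j)).card : ℝ) := by
  set S := univ.filter (fun j => τ < z j)
  have hsum : ∑ j ∈ S, z j - S.card * τ = 1 := by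
    have hpos : ∀ j, max (z j - τ) 0 = if τ < z j then z j - τ else 0 := fun j => by
      split_ifs with h
      · exact max_eq_left (sub_pos.mpr h).le
      · exact max_eq_right (sub_nonpos.mpr (not_lt.mp h))
    rw [← hτ, ← nsmul_eq_mul, ← sum_const, ← sum_sub_distrib, sum_filter]
    exact sum_congr rfl fun j _ => (hpos j).symm
  have hS : (S.card : ℝ) ≠ 0 := by
    intro h
    rw [Nat.cast_eq_zero, card_eq_zero] at h
    simp [h] at hsum
  rw [eq_div_iff hS]
  linarith

end

open Classical in
theorem tau_eq_support_formula_general (K : ℕ) (z : Fin K → ℝ)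
    (p : Fin K → ℝ)
    (hp : p ∈ stdSimplex' K ∧
      ∀ y ∈ stdSimplex' K, ∑ i, (p i - z i) ^ 2 ≤ ∑ i, (y i - z i) ^ 2)
    (τ : ℝ) (hτ : ∑ j, max (z j - τ) 0 = 1) :
    τ = ((∑ j ∈ Finset.univ.filter (fun j => 0 < p j), z j) - 1) /
        ((Finset.univ.filter (fun j => 0 < p j)).card : ℝ) := by
  have hq_mem : (fun j => max (z j - τ) 0) ∈ stdSimplex ℝ (Fin K) :=
    ⟨fun j => le_max_right _ _, hτ⟩
  have hpq : p = fun j => max (z j - τ) 0 :=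
    eq_of_sum_sq_sub_le_of_variational hp.2 hp.1
      (fun y hy => sum_sub_mul_sub_max_sub_zero_nonpos hτ hy) hq_mem
  have hsupp : univ.filter (fun j => 0 < p j) = univ.filter (fun j => τ < z j) := by
    ext j
    simp [hpq]
  rw [hsupp]
  exact eq_sum_filter_lt_sub_one_div_card hτ

open Classical in
/-- the unique `τ` with `Σ_j max(z_j − τ, 0) = 1` equals
`((Σ_{j ∈ S(z)} z_j) − 1)/|S(z)|`, where `S(z)` is the support of the Euclidean
projection `p = sparsemax(z)` of `z` onto the simplex. -/
theorem tau_eq_support_formula (K : ℕ) (hK : 1 ≤ K) (z : Fin K → ℝ)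
    (p : Fin K → ℝ)
    (hp : p ∈ stdSimplex' K ∧
      ∀ y ∈ stdSimplex' K, ∑ i, (p i - z i) ^ 2 ≤ ∑ i, (y i - z i) ^ 2)
    (τ : ℝ) (hτ : ∑ j, max (z j - τ) 0 = 1) :
    τ = ((∑ j ∈ Finset.univ.filter (fun j => 0 < p j), z j) - 1) /
        ((Finset.univ.filter (fun j => 0 < p j)).card : ℝ) :=
  tau_eq_support_formula_general K z p hp τ hτ
end
end

section
/- Let z ∈ ℝ^K (K ≥ 1) and let τ(z) be the unique real number with Σ_j max(z_j − τ(z), 0) = 1. If z_j ≠ τ(z) for every j ∈ {1,…,K} (i.e. z is not a splitting point where the support changes), then the map sparsemax : ℝ^K → ℝ^K (Euclidean projection onto the standard probability simplex) is differentiable at z, and its Jacobian satisfies ∂sparsemax_i(z)/∂z_j = δ_{ij} − 1/|S(z)| when both i, j ∈ S(z), and ∂sparsemax_i(z)/∂z_j = 0 otherwise, where S(z) = {j : sparsemax_j(z) > 0} and δ_{ij} is the Kronecker delta. -/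
open Finset

noncomputable section

/-- `sparsemax(w)`: the Euclidean projection of `w` onto the simplex, i.e. the
(unique) minimizer of `‖y − w‖²` over `Δ^{K−1}`, as a map `ℝ^K → ℝ^K`. -/
def sparsemax (K : ℕ) (w : Fin K → ℝ) : Fin K → ℝ :=
  Classical.epsilon (fun p => p ∈ stdSimplex' K ∧
    ∀ y ∈ stdSimplex' K, ∑ i, (p i - w i) ^ 2 ≤ ∑ i, (y i - w i) ^ 2)

/-!
If `∑ j, max (w j - t) 0 = 1`, then `p = max (w - t) 0` satisfies the variational inequality
`⟪p - w, y - p⟫ ≥ 0` on the simplex, because `p - w` equals `-t` on the support of `p` and is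
at least `-t` off it; hence `p = sparsemax w`. If no `z j` equals `τ`, the sign pattern
`S = {j | τ < z j}` of `z - τ` persists for `w` near `z` with the threshold
`t_S w = (∑_{l ∈ S} w l - 1) / |S|`, which is affine in `w`. So near `z` sparsemax is the affine
map `w ↦ 1_S · (w - t_S w)`, whose linear part has matrix `δ_ij - 1/|S|` on `S × S` and `0`
elsewhere.
-/

open Topology Filter Matrix

variable {ι : Type*}

section Projection

variable [Fintype ι]

theorem eq_of_isMinOn_sum_sq {C : Set (ι → ℝ)} (hC : Convex ℝ C) {w p q : ι → ℝ}
    (hp : p ∈ C) (hq : q ∈ C) (hpmin : IsMinOn (fun y => ∑ i, (y i - w i) ^ 2) C p)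
    (hqmin : IsMinOn (fun y => ∑ i, (y i - w i) ^ 2) C q) : p = q := by
  have hmid : (1 / 2 : ℝ) • p + (1 / 2 : ℝ) • q ∈ C :=
    hC hp hq (by norm_num) (by norm_num) (by norm_num)
  -- parallelogram law: the midpoint is closer to `w` by a quarter of `∑ (p i - q i) ^ 2`
  have hpar : ∑ i, (((1 / 2 : ℝ) • p + (1 / 2 : ℝ) • q) i - w i) ^ 2 =
      (∑ i, (p i - w i) ^ 2 + ∑ i, (q i - w i) ^ 2) / 2 - (∑ i, (p i - q i) ^ 2) / 4 := by
    simp only [Pi.add_apply, Pi.smul_apply, smul_eq_mul, ← sum_add_distrib, sum_div,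
      ← sum_sub_distrib]
    exact sum_congr rfl fun i _ => by ring
  have hle_mid := isMinOn_iff.mp hpmin _ hmid
  have hle_p := isMinOn_iff.mp hqmin p hp
  have hzero : ∑ i, (p i - q i) ^ 2 = 0 :=
    le_antisymm (by linarith) (sum_nonneg fun i _ => sq_nonneg _)
  funext i
  have := (sum_eq_zero_iff_of_nonneg fun i _ => sq_nonneg (p i - q i)).mp hzero i (mem_univ i)
  exact sub_eq_zero.mp (pow_eq_zero_iff two_ne_zero |>.mp this)

theorem max_sub_mem_stdSimplex {w : ι → ℝ} {t : ℝ} (h : ∑ i, max (w i - t) 0 = 1) :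
    (fun i => max (w i - t) 0) ∈ stdSimplex ℝ ι :=
  ⟨fun _ => le_max_right _ _, h⟩

theorem isMinOn_sum_sq_max_sub {w : ι → ℝ} {t : ℝ} (h : ∑ i, max (w i - t) 0 = 1) :
    IsMinOn (fun y => ∑ i, (y i - w i) ^ 2) (stdSimplex ℝ ι) (fun i => max (w i - t) 0) := by
  set p : ι → ℝ := fun i => max (w i - t) 0
  refine isMinOn_iff.mpr fun y ⟨hy0, hy1⟩ => ?_
  have hterm : ∀ i, -t * (y i - p i) ≤ (p i - w i) * (y i - p i) := by
    intro i
    rcases le_total t (w i) with hi | hi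
    · simp [p, max_eq_left (sub_nonneg.mpr hi)]
    · simp only [p, max_eq_right (sub_nonpos.mpr hi)]
      nlinarith [hy0 i]
  have hvar : 0 ≤ ∑ i, (p i - w i) * (y i - p i) :=
    calc (0 : ℝ) = ∑ i, -t * (y i - p i) := by
          rw [← mul_sum, sum_sub_distrib, hy1, h, sub_self, mul_zero]
      _ ≤ _ := sum_le_sum fun i _ => hterm i
  have hexp : ∑ i, (y i - w i) ^ 2 = ∑ i, (p i - w i) ^ 2 +
      (∑ i, (y i - p i) ^ 2 + 2 * ∑ i, (p i - w i) * (y i - p i)) := by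
    rw [mul_sum, ← sum_add_distrib, ← sum_add_distrib]
    exact sum_congr rfl fun i _ => by ring
  have hsq : 0 ≤ ∑ i, (y i - p i) ^ 2 := sum_nonneg fun i _ => sq_nonneg _
  linarith

end Projection

section Threshold

def simplexThreshold (S : Finset ι) (w : ι → ℝ) : ℝ :=
  (∑ l ∈ S, w l - 1) / #S

-- the Euclidean projection onto the affine span of the face of the simplex with vertices `S`
def faceProj [DecidableEq ι] (S : Finset ι) (w : ι → ℝ) : ι → ℝ :=
  fun i => if i ∈ S then w i - simplexThreshold S w else 0

variable {S : Finset ι}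

theorem sum_sub_simplexThreshold (hS : S.Nonempty) (w : ι → ℝ) :
    ∑ j ∈ S, (w j - simplexThreshold S w) = 1 := by
  have hcard : (#S : ℝ) ≠ 0 := by exact_mod_cast hS.card_pos.ne'
  rw [sum_sub_distrib, sum_const, nsmul_eq_mul, simplexThreshold]
  field_simp
  ring

theorem simplexThreshold_eq {w : ι → ℝ} {t : ℝ} (hS : S.Nonempty)
    (h : ∑ j ∈ S, (w j - t) = 1) : simplexThreshold S w = t := by
  have hcard : (#S : ℝ) ≠ 0 := by exact_mod_cast hS.card_pos.ne'
  rw [sum_sub_distrib, sum_const, nsmul_eq_mul] at h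
  rw [simplexThreshold]
  field_simp
  linarith

variable [DecidableEq ι]

theorem max_sub_eq_ite {w : ι → ℝ} {t : ℝ} (hS : ∀ j, j ∈ S ↔ t < w j) :
    (fun j => max (w j - t) 0) = fun j => if j ∈ S then w j - t else 0 := by
  funext j
  by_cases hj : j ∈ S
  · simp [hj, ((hS j).mp hj).le]
  · simp [hj, not_lt.mp (mt (hS j).mpr hj)]

variable [Fintype ι] {z : ι → ℝ} {τ : ℝ}

theorem sum_max_sub_eq {w : ι → ℝ} {t : ℝ} (hS : ∀ j, j ∈ S ↔ t < w j) :
    ∑ j, max (w j - t) 0 = ∑ j ∈ S, (w j - t) := by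
  rw [max_sub_eq_ite hS, sum_ite_mem, univ_inter]

theorem nonempty_of_sum_max_sub_eq_one (hS : ∀ j, j ∈ S ↔ τ < z j)
    (hτ : ∑ j, max (z j - τ) 0 = 1) : S.Nonempty :=
  nonempty_of_sum_ne_zero (f := fun j => z j - τ) <| by
    rw [← sum_max_sub_eq hS, hτ]
    exact one_ne_zero

theorem eventually_mem_iff_simplexThreshold_lt (hS : ∀ j, j ∈ S ↔ τ < z j)
    (hτ : ∑ j, max (z j - τ) 0 = 1) (hsplit : ∀ j, z j ≠ τ) :
    ∀ᶠ w in 𝓝 z, ∀ j, j ∈ S ↔ simplexThreshold S w < w j := by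
  have hτz : simplexThreshold S z = τ :=
    simplexThreshold_eq (nonempty_of_sum_max_sub_eq_one hS hτ) ((sum_max_sub_eq hS).symm.trans hτ)
  have hcont : Continuous (simplexThreshold S) := by
    unfold simplexThreshold
    fun_prop
  rw [eventually_all]
  intro j
  by_cases hj : j ∈ S
  · have hlt : simplexThreshold S z < z j := hτz ▸ (hS j).mp hj
    filter_upwards [hcont.continuousAt.eventually_lt (continuous_apply j).continuousAt hlt]
      with w hw
    exact iff_of_true hj hw
  · have hlt : z j < simplexThreshold S z :=
      hτz ▸ lt_of_le_of_ne (not_lt.mp (mt (hS j).mpr hj)) (hsplit j)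
    filter_upwards [(continuous_apply j).continuousAt.eventually_lt hcont.continuousAt hlt]
      with w hw
    exact iff_of_false hj hw.not_gt

end Threshold

section Jacobian

variable [Fintype ι] [DecidableEq ι]

def sparsemaxJacobian (S : Finset ι) : Matrix ι ι ℝ :=
  Matrix.of fun i j => if i ∈ S ∧ j ∈ S then (if i = j then 1 else 0) - 1 / #S else 0

theorem faceProj_eq_mulVec_add (S : Finset ι) (w : ι → ℝ) :
    faceProj S w = sparsemaxJacobian S *ᵥ w + fun i => if i ∈ S then (1 / #S : ℝ) else 0 := by
  funext i
  by_cases hi : i ∈ S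
  · simp only [faceProj, hi, if_true, simplexThreshold, sparsemaxJacobian, one_div, ite_and,
      Pi.add_apply, mulVec, dotProduct, of_apply, ite_mul, zero_mul, sum_ite_mem, univ_inter]
    simp only [sub_mul, sum_sub_distrib, ite_mul, one_mul, zero_mul, sum_ite_eq, hi, if_true,
      ← mul_sum]
    ring
  · simp [faceProj, mulVec, dotProduct, sparsemaxJacobian, hi]

theorem hasFDerivAt_faceProj (S : Finset ι) (z : ι → ℝ) :
    HasFDerivAt (faceProj S) (toLin' (sparsemaxJacobian S)).toContinuousLinearMap z := by
  rw [show faceProj S = _ from funext (faceProj_eq_mulVec_add S)]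
  exact (toLin' (sparsemaxJacobian S)).toContinuousLinearMap.hasFDerivAt.add_const _

end Jacobian

section Sparsemax

variable {K : ℕ}

theorem sparsemax_eq_of_isMinOn {w p : Fin K → ℝ} (hp : p ∈ stdSimplex' K)
    (hmin : IsMinOn (fun y => ∑ i, (y i - w i) ^ 2) (stdSimplex' K) p) : sparsemax K w = p :=
  have hspec := Classical.epsilon_spec (p := fun p => p ∈ stdSimplex' K ∧
    ∀ y ∈ stdSimplex' K, ∑ i, (p i - w i) ^ 2 ≤ ∑ i, (y i - w i) ^ 2) ⟨p, hp, isMinOn_iff.mp hmin⟩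
  eq_of_isMinOn_sum_sq (convex_stdSimplex ℝ (Fin K)) hspec.1 hp (isMinOn_iff.mpr hspec.2) hmin

theorem sparsemax_eq_max_sub {w : Fin K → ℝ} {t : ℝ} (h : ∑ i, max (w i - t) 0 = 1) :
    sparsemax K w = fun i => max (w i - t) 0 :=
  sparsemax_eq_of_isMinOn (max_sub_mem_stdSimplex h) (isMinOn_sum_sq_max_sub h)

theorem sparsemax_eventuallyEq_faceProj {S : Finset (Fin K)} {z : Fin K → ℝ} {τ : ℝ}
    (hS : ∀ j, j ∈ S ↔ τ < z j) (hτ : ∑ j, max (z j - τ) 0 = 1) (hsplit : ∀ j, z j ≠ τ) :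
    sparsemax K =ᶠ[𝓝 z] faceProj S := by
  filter_upwards [eventually_mem_iff_simplexThreshold_lt hS hτ hsplit] with w hw
  have hsum : ∑ j, max (w j - simplexThreshold S w) 0 = 1 := by
    rw [sum_max_sub_eq hw, sum_sub_simplexThreshold (nonempty_of_sum_max_sub_eq_one hS hτ)]
  rw [sparsemax_eq_max_sub hsum, max_sub_eq_ite hw]
  rfl

end Sparsemax

open Classical in
theorem sparsemax_jacobian_general (K : ℕ) (z : Fin K → ℝ)
    (τ : ℝ) (hτ : ∑ j, max (z j - τ) 0 = 1) (hsplit : ∀ j, z j ≠ τ) :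
    DifferentiableAt ℝ (sparsemax K) z ∧
    ∀ i j, fderiv ℝ (sparsemax K) z (Pi.single j 1) i =
      if 0 < sparsemax K z i ∧ 0 < sparsemax K z j then
        (if i = j then (1 : ℝ) else 0) -
          1 / ((Finset.univ.filter (fun l => 0 < sparsemax K z l)).card : ℝ)
      else 0 := by
  set S := univ.filter fun j => τ < z j
  have hS : ∀ j, j ∈ S ↔ τ < z j := mem_filter_univ
  have hderiv :
      HasFDerivAt (sparsemax K) (toLin' (sparsemaxJacobian S)).toContinuousLinearMap z :=
    (hasFDerivAt_faceProj S z).congr_of_eventuallyEq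
      (sparsemax_eventuallyEq_faceProj hS hτ hsplit)
  have hsupp : ∀ l, 0 < sparsemax K z l ↔ l ∈ S := fun l => by
    rw [sparsemax_eq_max_sub hτ, hS, lt_max_iff, sub_pos, lt_self_iff_false, or_false]
  refine ⟨hderiv.differentiableAt, fun i j => ?_⟩
  rw [hderiv.fderiv, filter_congr fun l _ => hsupp l, LinearMap.coe_toContinuousLinearMap',
    toLin'_apply, mulVec_single_one, col_apply]
  simp only [sparsemaxJacobian, of_apply, hsupp, filter_mem_eq_inter, univ_inter]

open Classical in
/-- away from splitting points (`z_j ≠ τ(z)` for all `j`),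
`sparsemax` is differentiable at `z` with Jacobian
`∂sparsemax_i/∂z_j = δ_{ij} − 1/|S(z)|` if `i, j ∈ S(z)` and `0` otherwise. -/
theorem sparsemax_jacobian (K : ℕ) (hK : 1 ≤ K) (z : Fin K → ℝ)
    (τ : ℝ) (hτ : ∑ j, max (z j - τ) 0 = 1) (hsplit : ∀ j, z j ≠ τ) :
    DifferentiableAt ℝ (sparsemax K) z ∧
    ∀ i j, fderiv ℝ (sparsemax K) z (Pi.single j 1) i =
      if 0 < sparsemax K z i ∧ 0 < sparsemax K z j then
        (if i = j then (1 : ℝ) else 0) -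
          1 / ((Finset.univ.filter (fun l => 0 < sparsemax K z l)).card : ℝ)
      else 0 :=
  sparsemax_jacobian_general K z τ hτ hsplit
end
end
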